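/- Let n ≠ m be positive integers, f a nonidentity permutation of {1,…,n}, g a nonidentity permutation of {1,…,m}, let s, t be bracketings with n leaves and s', t' bracketings with m leaves. Then the linear identities I = ⟨s,t,f⟩ (of length 2n) and J = ⟨s',t',g⟩ (of length 2m) do not define the same variety; more precisely, if n < m then J does not imply I, i.e., there exists a magma satisfying J but not satisfying I. -/
import Mathlib


/-- Bracketings: full binary trees in which every internal node has two children. -/
inductive Brack : Type
  | leaf : Brack
  | node : Brack → Brack → Brack

/-- Number of leaves of a bracketing. -/
def Brack.leaves : Brack → ℕ
  | .leaf => 1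
  | .node l r => l.leaves + r.leaves

/-- The `s`-product in a magma `G`: evaluate the bracketing `s`, labelling its leaves
from left to right by `a k, a (k+1), …`. -/
def Brack.eval {G : Type*} [Mul G] : Brack → (ℕ → G) → ℕ → G
  | .leaf, a, k => a k
  | .node l r, a, k => l.eval a k * r.eval a (k + l.leaves)

/-- Extend a permutation of `{0, …, n−1}` to `ℕ` (identity elsewhere). -/
def permNat {n : ℕ} (f : Equiv.Perm (Fin n)) (i : ℕ) : ℕ :=
  if h : i < n then (f ⟨i, h⟩ : ℕ) else i

/-- A magma `G` satisfies the linear identity `⟨s, t, f⟩` if for all `a₁, …, aₙ ∈ G`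
the `s`-product of `(a₁, …, aₙ)` equals the `t`-product of `(a_{f(1)}, …, a_{f(n)})`. -/
def Satisfies (G : Type*) [Mul G] {n : ℕ} (s t : Brack) (f : Equiv.Perm (Fin n)) : Prop :=
  ∀ a : ℕ → G, s.eval a 0 = t.eval (fun i => a (permNat f i)) 0

/-- A magma `G` is `m`AC-nice if any two products of the same `m` elements coincide:
for every `a`, all bracketings `s, t` with `m` leaves and all permutations `f, g`,
the `s`-product of `(a_{f(1)}, …, a_{f(m)})` equals the `t`-product of
`(a_{g(1)}, …, a_{g(m)})`. -/
def ACnice (G : Type*) [Mul G] (m : ℕ) : Prop :=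
  ∀ (a : ℕ → G) (s t : Brack), s.leaves = m → t.leaves = m →
    ∀ f g : Equiv.Perm (Fin m),
      s.eval (fun i => a (permNat f i)) 0 = t.eval (fun i => a (permNat g i)) 0

section Aux
universe w

abbrev Wd : Type w := {l : List (ULift.{w} ℕ) // l ≠ []}

structure Mg (m : ℕ) : Type w where
  val : Option (Wd.{w})

def Mg.bot (m : ℕ) : Mg.{w} m := ⟨none⟩

def Mg.wd (m : ℕ) (l : Wd.{w}) : Mg.{w} m := ⟨some l⟩

instance (m : ℕ) : Mul (Mg.{w} m) where
  mul x y := ⟨match x.val, y.val with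
    | some a, some b =>
        if m ≤ a.1.length + b.1.length then none
        else some ⟨a.1 ++ b.1, fun h => a.2 (List.append_eq_nil_iff.mp h).1⟩
    | _, _ => none⟩

lemma mg_cases (m : ℕ) (x : Mg.{w} m) : x = Mg.bot m ∨ ∃ l, x = Mg.wd m l := by
  rcases x with ⟨_ | l⟩
  · exact Or.inl rfl
  · exact Or.inr ⟨l, rfl⟩

lemma mg_mul_bot (m : ℕ) (x : Mg.{w} m) : x * Mg.bot m = Mg.bot m := by
  rcases x with ⟨_ | l⟩ <;> rfl

lemma mg_bot_mul (m : ℕ) (x : Mg.{w} m) : Mg.bot m * x = Mg.bot m := by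
  rcases x with ⟨_ | l⟩ <;> rfl

lemma mg_wd_mul_wd (m : ℕ) (a b : Wd.{w}) :
    Mg.wd m a * Mg.wd m b =
      if m ≤ a.1.length + b.1.length then Mg.bot m
      else Mg.wd m ⟨a.1 ++ b.1, fun h => a.2 (List.append_eq_nil_iff.mp h).1⟩ := by
  by_cases h : m ≤ a.1.length + b.1.length <;>
    simp only [HMul.hMul, Mul.mul, Mg.wd, Mg.bot, h, if_true, if_false, reduceIte]

def glen (m : ℕ) (x : Mg.{w} m) : ℕ :=
  match x.val with
  | none => m
  | some l => l.1.length

lemma glen_bot (m : ℕ) : glen m (Mg.bot m) = m := rfl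
lemma glen_wd (m : ℕ) (l : Wd.{w}) : glen m (Mg.wd m l) = l.1.length := rfl

lemma leaves_pos (b : Brack) : 1 ≤ b.leaves := by
  induction b with
  | leaf => simp [Brack.leaves]
  | node p q ihp ihq => simp [Brack.leaves]; omega

lemma sum_range_add' (f : ℕ → ℕ) (p q : ℕ) :
    ∑ i ∈ Finset.range (p + q), f i =
      (∑ i ∈ Finset.range p, f i) + ∑ i ∈ Finset.range q, f (p + i) := by
  induction q with
  | zero => simp
  | succ q ih =>
      rw [Nat.add_succ, Finset.sum_range_succ, Finset.sum_range_succ, ih, Nat.add_assoc]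

lemma evalSpec (m : ℕ) (b : Brack) (a : ℕ → Mg.{w} m) (k : ℕ) :
    Brack.eval b a k = Mg.bot m ∨
    ∃ l : Wd.{w}, Brack.eval b a k = Mg.wd m l ∧
      l.1.length = ∑ i ∈ Finset.range b.leaves, glen m (a (k + i)) ∧
      (b ≠ .leaf → l.1.length < m) := by
  induction b generalizing k with
  | leaf =>
      rcases mg_cases m (a k) with h | ⟨l, h⟩
      · exact Or.inl h
      · refine Or.inr ⟨l, h, ?_, by simp⟩
        simp [Brack.leaves, glen_wd, h]
  | node p q ihp ihq =>
      have hsplit : ∑ i ∈ Finset.range (Brack.node p q).leaves, glen m (a (k + i)) =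
          (∑ i ∈ Finset.range p.leaves, glen m (a (k + i))) +
            ∑ i ∈ Finset.range q.leaves, glen m (a (k + p.leaves + i)) := by
        show ∑ i ∈ Finset.range (p.leaves + q.leaves), _ = _
        rw [sum_range_add']
        congr 1
        exact Finset.sum_congr rfl fun i _ => by rw [Nat.add_assoc]
      have heval : (Brack.node p q).eval a k = p.eval a k * q.eval a (k + p.leaves) := rfl
      rcases ihp k with h1 | ⟨l1, h1, e1, -⟩
      · rw [heval, h1, mg_bot_mul]; exact Or.inl rfl
      rcases ihq (k + p.leaves) with h2 | ⟨l2, h2, e2, -⟩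
      · rw [heval, h2, mg_mul_bot]; exact Or.inl rfl
      rw [heval, h1, h2, mg_wd_mul_wd]
      by_cases hc : m ≤ l1.1.length + l2.1.length
      · rw [if_pos hc]; exact Or.inl rfl
      · rw [if_neg hc]
        refine Or.inr ⟨_, rfl, ?_, fun _ => ?_⟩
        · simp only [List.length_append, hsplit, e1, e2]
        · simp only [List.length_append]; omega

lemma eval_eq_bot (m : ℕ) (hm : 2 ≤ m) (b : Brack) (hb : b.leaves = m)
    (a : ℕ → Mg.{w} m) (k : ℕ) : Brack.eval b a k = Mg.bot m := by
  rcases evalSpec m b a k with h | ⟨l, h, hlen, hlt⟩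
  · exact h
  · exfalso
    have hleaf : b ≠ .leaf := by
      intro e; subst e; simp [Brack.leaves] at hb; omega
    have h1 : ∀ i ∈ Finset.range b.leaves, 1 ≤ glen m (a (k + i)) := by
      intro i _
      rcases mg_cases m (a (k + i)) with hx | ⟨w, hx⟩
      · rw [hx, glen_bot]; omega
      · rw [hx, glen_wd]; exact List.length_pos_iff.mpr w.2
    have hge : b.leaves ≤ ∑ i ∈ Finset.range b.leaves, glen m (a (k + i)) := by
      calc b.leaves = ∑ _i ∈ Finset.range b.leaves, 1 := by simp
        _ ≤ _ := Finset.sum_le_sum h1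
    have := hlt hleaf
    omega

lemma evalSmall (m : ℕ) (b : Brack) (hb : b.leaves < m) (x : ℕ → ULift.{w} ℕ) (k : ℕ) :
    ∃ l : Wd.{w},
      Brack.eval b (fun i => Mg.wd m ⟨[x i], by simp⟩) k = Mg.wd m l ∧
      l.1 = (List.range b.leaves).map (fun i => x (k + i)) := by
  induction b generalizing k with
  | leaf =>
      refine ⟨⟨[x k], by simp⟩, rfl, ?_⟩
      simp [Brack.leaves, List.range_succ]
  | node p q ihp ihq =>
      have hb' : p.leaves + q.leaves < m := hb
      have hple : p.leaves < m := by have := leaves_pos q; omega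
      have hqle : q.leaves < m := by have := leaves_pos p; omega
      obtain ⟨l1, h1, e1⟩ := ihp hple k
      obtain ⟨l2, h2, e2⟩ := ihq hqle (k + p.leaves)
      have hl1 : l1.1.length = p.leaves := by simp [e1]
      have hl2 : l2.1.length = q.leaves := by simp [e2]
      have hc : ¬ m ≤ l1.1.length + l2.1.length := by omega
      refine ⟨⟨l1.1 ++ l2.1, fun h => l1.2 (List.append_eq_nil_iff.mp h).1⟩, ?_, ?_⟩
      · show p.eval _ k * q.eval _ (k + p.leaves) = _
        rw [h1, h2, mg_wd_mul_wd, if_neg hc]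
      · show l1.1 ++ l2.1 = (List.range (p.leaves + q.leaves)).map _
        rw [e1, e2, List.range_add, List.map_append, List.map_map]
        congr 1
        apply List.map_congr_left
        intro i _
        simp only [Function.comp_apply]
        congr 1
        omega

lemma mg_sat (m : ℕ) (hm : 2 ≤ m) (s' t' : Brack) (hs' : s'.leaves = m)
    (ht' : t'.leaves = m) (g : Equiv.Perm (Fin m)) : Satisfies (Mg.{w} m) s' t' g := by
  intro a
  rw [eval_eq_bot m hm s' hs', eval_eq_bot m hm t' ht']

lemma mg_not_sat (m n : ℕ) (hnm : n < m) (f : Equiv.Perm (Fin n)) (hf : f ≠ 1)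
    (s t : Brack) (hs : s.leaves = n) (ht : t.leaves = n) :
    ¬ Satisfies (Mg.{w} m) s t f := by
  intro H
  obtain ⟨i0, hi0⟩ : ∃ i, f i ≠ i := by
    by_contra h; push_neg at h; exact hf (Equiv.ext h)
  have h := H (fun i => Mg.wd m ⟨[ULift.up i], by simp⟩)
  obtain ⟨l1, e1, w1⟩ := evalSmall m s (hs ▸ hnm) (fun i => ULift.up i) 0
  obtain ⟨l2, e2, w2⟩ := evalSmall m t (ht ▸ hnm) (fun i => ULift.up (permNat f i)) 0
  rw [e1] at h
  rw [show (fun i => (fun j => Mg.wd m ⟨[ULift.up j], by simp⟩) (permNat f i))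
      = fun i => Mg.wd m ⟨[ULift.up (permNat f i)], by simp⟩ from rfl, e2] at h
  have hl : l1.1 = l2.1 := by
    have : l1 = l2 := by
      have := h
      simpa [Mg.wd, Option.some_inj] using congrArg Mg.val this
    rw [this]
  rw [w1, w2, hs, ht] at hl
  have hidx := congrArg (fun L => L[(i0 : ℕ)]?) hl
  simp only [List.getElem?_map, List.getElem?_range i0.2, Option.map_some] at hidx
  have : (i0 : ℕ) = permNat f (0 + (i0 : ℕ)) := by
    have := Option.some_inj.mp hidx
    simpa using congrArg ULift.down this
  rw [Nat.zero_add, permNat, dif_pos i0.2] at this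
  have h2 : f ⟨(i0 : ℕ), i0.2⟩ = i0 := Fin.ext this.symm
  rw [Fin.eta] at h2
  exact hi0 h2

lemma two_le_of_ne_one {n : ℕ} (f : Equiv.Perm (Fin n)) (hf : f ≠ 1) : 2 ≤ n := by
  by_contra h
  push_neg at h
  apply hf
  have : Subsingleton (Fin n) := ⟨fun a b => Fin.ext (by omega)⟩
  exact Equiv.ext fun x => Subsingleton.elim _ _

end Aux

/-- Theorem 4.5: if `f ∈ Sₙ`, `g ∈ Sₘ` are nonidentity permutations and `n ≠ m`, then the
linear identities `I = ⟨s,t,f⟩` of length `2n` and `J = ⟨s',t',g⟩` of length `2m` do not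
define the same variety; more precisely, if `n < m`, there is a magma satisfying `J` but
not `I`. -/
theorem stmt6.{w} (n m : ℕ) (hn : 0 < n) (hm : 0 < m) (hnm : n ≠ m)
    (f : Equiv.Perm (Fin n)) (hf : f ≠ 1) (g : Equiv.Perm (Fin m)) (hg : g ≠ 1)
    (s t : Brack) (hs : s.leaves = n) (ht : t.leaves = n)
    (s' t' : Brack) (hs' : s'.leaves = m) (ht' : t'.leaves = m) :
    ¬(∀ (G : Type w) [Mul G], Satisfies G s t f ↔ Satisfies G s' t' g) ∧
    (n < m → ∃ (G : Type w) (inst : Mul G),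
      @Satisfies G inst m s' t' g ∧ ¬@Satisfies G inst n s t f) := by
  constructor
  · intro h
    rcases Nat.lt_or_ge n m with hlt | hge
    · exact mg_not_sat.{w} m n hlt f hf s t hs ht
        ((h (Mg.{w} m)).mpr (mg_sat m (two_le_of_ne_one g hg) s' t' hs' ht' g))
    · have hlt : m < n := lt_of_le_of_ne hge (Ne.symm hnm)
      exact mg_not_sat.{w} n m hlt g hg s' t' hs' ht'
        ((h (Mg.{w} n)).mp (mg_sat n (two_le_of_ne_one f hf) s t hs ht f))
  · intro hlt
    exact ⟨Mg.{w} m, inferInstance, mg_sat m (two_le_of_ne_one g hg) s' t' hs' ht' g,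
      mg_not_sat.{w} m n hlt f hf s t hs ht⟩
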